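/- Let H be a ℤ-graded Hopf algebra over a field k satisfying the twisting conditions, and let (τ, μ) be a twisting pair of H. Let σ, σ' : H × H → k be the bilinear maps determined by σ(x, y) = ε(x)·ε(τ_n(y)) and σ'(x, y) = ε(x)·ε(μ_n(y)) for all n ∈ ℤ, homogeneous x ∈ H_n, and y ∈ H. Then σ is a right 2-cocycle on H: Σ σ(x_1·y_1, z)·σ(x_2, y_2) = Σ σ(x, y_1·z_1)·σ(y_2, z_2) for all x, y, z ∈ H, and σ(x, 1) = σ(1, x) = ε(x); moreover σ' is the convolution inverse of σ, i.e., Σ σ(x_1, y_1)·σ'(x_2, y_2) = ε(x)ε(y) = Σ σ'(x_1, y_1)·σ(x_2, y_2) for all x, y ∈ H. -/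

import Mathlib

open TensorProduct

/-- A twisting system of a ℤ-graded algebra. -/
def IsTwistingSystem {k A : Type*} [CommSemiring k] [Semiring A] [Algebra k A]
    (𝒜 : ℤ → Submodule k A) (τ : ℤ → (A →ₗ[k] A)) : Prop :=
  (∀ i : ℤ, Function.Bijective (τ i)) ∧
  (∀ (i n : ℤ), ∀ a ∈ 𝒜 n, τ i a ∈ 𝒜 n) ∧
  (τ 0 = LinearMap.id) ∧
  (∀ i : ℤ, τ i 1 = 1) ∧
  (∀ (i j : ℤ), ∀ a ∈ 𝒜 j, ∀ b : A, τ i (a * τ j b) = τ i a * τ (i + j) b)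


/-!
On a homogeneous `x ∈ H_n` the pairing is `σ(x, -) = ε(x) f_n` with `f_n = ε ∘ τ_n`, and since
`Δ` preserves degrees, every Sweedler sum over homogeneous arguments factors into convolution
products of such functionals. By (P1), convolving with `f_n` on the right precomposes with `τ_n`
and convolving with `g_n = ε ∘ μ_n` on the left precomposes with `μ_n`; with (P2) this makes `g_n`
a left inverse of `f_n` and `ε ∘ τ_n⁻¹` a right inverse, so `f_n` and `g_n` are mutually inverse.
For `x ∈ H_n` and `y ∈ H_m` both sides of the cocycle identity reduce to
`ε(x) f_n(y) f_{n+m}(z)`, the right-hand side through the twisting rule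
`τ_n(y z) = τ_n(y) τ_{n+m}(τ_m⁻¹ z)`. All identities are linear in `x` and `y`, so the
homogeneous case suffices.
-/

open Coalgebra WithConv

section Convolution

variable {R C : Type*} [CommSemiring R] [AddCommMonoid C] [Module R C] [Coalgebra R C]

theorem convMul_counit_comp {T : C →ₗ[R] C}
    (hT : comul ∘ₗ T = map LinearMap.id T ∘ₗ comul) (φ : WithConv (C →ₗ[R] R)) :
    φ * toConv (counit ∘ₗ T) = toConv (φ.ofConv ∘ₗ T) := by
  ext c
  calc (φ * toConv (counit ∘ₗ T)) c
      = LinearMap.mul' R R (map φ.ofConv counit ((map LinearMap.id T ∘ₗ comul) c)) := by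
        rw [LinearMap.comp_apply, map_map]; rfl
    _ = (φ * 1) (T c) := by rw [← hT]; rfl
    _ = φ (T c) := by rw [mul_one]

theorem counit_comp_convMul {T : C →ₗ[R] C}
    (hT : comul ∘ₗ T = map T LinearMap.id ∘ₗ comul) (φ : WithConv (C →ₗ[R] R)) :
    toConv (counit ∘ₗ T) * φ = toConv (φ.ofConv ∘ₗ T) := by
  ext c
  calc (toConv (counit ∘ₗ T) * φ) c
      = LinearMap.mul' R R (map counit φ.ofConv ((map T LinearMap.id ∘ₗ comul) c)) := by
        rw [LinearMap.comp_apply, map_map]; rfl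
    _ = (1 * φ) (T c) := by rw [← hT]; rfl
    _ = φ (T c) := by rw [one_mul]

theorem comul_comp_symm {T : C ≃ₗ[R] C}
    (hT : comul ∘ₗ T.toLinearMap = map LinearMap.id T.toLinearMap ∘ₗ comul) :
    comul ∘ₗ T.symm.toLinearMap = map LinearMap.id T.symm.toLinearMap ∘ₗ comul := by
  ext c
  have h := congr(map LinearMap.id T.symm.toLinearMap ($hT (T.symm c)))
  simp only [LinearMap.comp_apply, LinearEquiv.coe_coe, LinearEquiv.apply_symm_apply,
    map_map, LinearMap.id_comp] at h
  simpa using h.symm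

theorem counit_comp_convMul_counit_comp_eq_one {T U : C →ₗ[R] C} (hT_bij : Function.Bijective T)
    (hT : comul ∘ₗ T = map LinearMap.id T ∘ₗ comul)
    (hU : comul ∘ₗ U = map U LinearMap.id ∘ₗ comul) (hTU : counit ∘ₗ (T ∘ₗ U) = counit) :
    toConv (counit ∘ₗ T) * toConv (counit ∘ₗ U) = 1 ∧
      toConv (counit ∘ₗ U) * toConv (counit ∘ₗ T) = 1 := by
  set e := LinearEquiv.ofBijective T hT_bij
  have h_left : toConv (counit ∘ₗ U) * toConv (counit ∘ₗ T) = 1 := by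
    rw [counit_comp_convMul hU, ofConv_toConv, LinearMap.comp_assoc, hTU]; rfl
  have h_right : toConv (counit ∘ₗ T) * toConv (counit ∘ₗ e.symm.toLinearMap) = 1 := by
    rw [convMul_counit_comp (comul_comp_symm (T := e) hT), ofConv_toConv, LinearMap.comp_assoc]
    ext c
    simp [e]
  refine ⟨?_, h_left⟩
  rwa [left_inv_eq_right_inv h_left h_right]

end Convolution

section Representations

variable {R A B ι κ : Type*} [CommSemiring R] [AddCommMonoid A] [Module R A] [Coalgebra R A]
  [AddCommMonoid B] [Module R B] [Coalgebra R B]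

theorem Coalgebra.Repr.convMul_tmul_apply {a : A} {b : B} (ℛa : Repr R a ι) (ℛb : Repr R b κ)
    (Φ Ψ : WithConv (A ⊗[R] B →ₗ[R] R)) :
    (Φ * Ψ) (a ⊗ₜ b) = ∑ i ∈ ℛa.index, ∑ j ∈ ℛb.index,
      Φ (ℛa.left i ⊗ₜ ℛb.left j) * Ψ (ℛa.right i ⊗ₜ ℛb.right j) := by
  simp [← ℛa.eq, ← ℛb.eq, sum_tmul, tmul_sum, map_sum]
  exact Finset.sum_comm

theorem Coalgebra.Repr.convMul_tmul_apply_of_factor {a : A} {b : B} (ℛa : Repr R a ι)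
    (ℛb : Repr R b κ) {Φ Ψ : WithConv (A ⊗[R] B →ₗ[R] R)} {α γ : WithConv (A →ₗ[R] R)}
    {β δ : WithConv (B →ₗ[R] R)}
    (hΦ : ∀ i j, Φ (ℛa.left i ⊗ₜ ℛb.left j) = α (ℛa.left i) * β (ℛb.left j))
    (hΨ : ∀ i j, Ψ (ℛa.right i ⊗ₜ ℛb.right j) = γ (ℛa.right i) * δ (ℛb.right j)) :
    (Φ * Ψ) (a ⊗ₜ b) = (α * γ) a * (β * δ) b := by
  rw [ℛa.convMul_tmul_apply, ℛa.convMul_apply, ℛb.convMul_apply, Finset.sum_mul_sum]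
  refine Finset.sum_congr rfl fun i _ => Finset.sum_congr rfl fun j _ => ?_
  rw [hΦ, hΨ, mul_mul_mul_comm]

theorem Coalgebra.exists_repr_of_comul_mem_range_mapIncl {a : A} {P Q : Submodule R A}
    (h : comul a ∈ LinearMap.range (mapIncl P Q)) :
    ∃ 𝓡 : Repr R a (P × Q), (∀ i, 𝓡.left i ∈ P) ∧ ∀ i, 𝓡.right i ∈ Q := by
  obtain ⟨t, ht⟩ := h
  obtain ⟨s, rfl⟩ := TensorProduct.exists_finset t
  exact ⟨⟨s, fun i => i.1, fun i => i.2, by simp [← ht, mapIncl]⟩,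
    fun i => i.1.2, fun i => i.2.2⟩

end Representations

namespace IsTwistingSystem

variable {k A : Type*} [CommSemiring k] [Semiring A] [Algebra k A] {𝒜 : ℤ → Submodule k A}
  {τ : ℤ → A →ₗ[k] A}

noncomputable def equiv (hτ : IsTwistingSystem 𝒜 τ) (i : ℤ) : A ≃ₗ[k] A :=
  LinearEquiv.ofBijective (τ i) (hτ.1 i)

theorem equiv_symm_apply_apply (hτ : IsTwistingSystem 𝒜 τ) (i : ℤ) (a : A) :
    (hτ.equiv i).symm (τ i a) = a :=
  (hτ.equiv i).symm_apply_apply a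

theorem map_mul (hτ : IsTwistingSystem 𝒜 τ) (i : ℤ) {j : ℤ} {a : A} (ha : a ∈ 𝒜 j) (b : A) :
    τ i (a * b) = τ i a * τ (i + j) ((hτ.equiv j).symm b) := by
  conv_lhs => rw [← (hτ.equiv j).apply_symm_apply b]
  exact hτ.2.2.2.2 i j a ha _

end IsTwistingSystem

section TwistedPairing

variable {k H : Type*} [CommSemiring k] [Semiring H] [Bialgebra k H]

def ComulPreservesGrading {ι : Type*} (𝒜 : ι → Submodule k H) : Prop :=
  ∀ n, ∀ b ∈ 𝒜 n, comul (R := k) b ∈ LinearMap.range (mapIncl (𝒜 n) (𝒜 n))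

theorem lift_convMul_lift_eq_one {ι : Type*} [DecidableEq ι] {𝒜 : ι → Submodule k H}
    [DirectSum.Decomposition 𝒜] (hΔ : ComulPreservesGrading 𝒜)
    {σ σ' : H →ₗ[k] H →ₗ[k] k} {F G : ι → WithConv (H →ₗ[k] k)}
    (hσ : ∀ n, ∀ x ∈ 𝒜 n, ∀ y : H, σ x y = counit (R := k) x * F n y)
    (hσ' : ∀ n, ∀ x ∈ 𝒜 n, ∀ y : H, σ' x y = counit (R := k) x * G n y)
    (hFG : ∀ n, F n * G n = 1) :
    toConv (lift σ) * toConv (lift σ') = 1 := by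
  refine WithConv.ext (TensorProduct.ext' fun x y => ?_)
  induction x using DirectSum.Decomposition.inductionOn 𝒜 with
  | zero => simp
  | add x x' hx hx' => rw [add_tmul, map_add, map_add, hx, hx']
  | @homogeneous n x =>
    obtain ⟨𝓡x, hx₁, hx₂⟩ := exists_repr_of_comul_mem_range_mapIncl (hΔ n x x.2)
    rw [𝓡x.convMul_tmul_apply_of_factor (ℛ k y) (α := 1) (β := F n) (γ := 1) (δ := G n)
      (fun i j => by simp [hσ n _ (hx₁ i)]) (fun i j => by simp [hσ' n _ (hx₂ i)]), hFG]
    simp [mul_comm]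

variable {𝒜 : ℤ → Submodule k H} [GradedAlgebra 𝒜] {τ : ℤ → H →ₗ[k] H}
  {σ : H →ₗ[k] H →ₗ[k] k}

/- The two sides are convolution products on the coalgebra `H ⊗ H`: the left one is
`∑ σ(x₁ y₁, z) σ(x₂, y₂)`, the right one `∑ σ(x, y₁ z₁) σ(y₂, z₂)`. -/
theorem twisted_cocycle_of_mem (hΔ : ComulPreservesGrading 𝒜) (hτ : IsTwistingSystem 𝒜 τ)
    (hτ_comul : ∀ i : ℤ, comul (R := k) ∘ₗ τ i = map LinearMap.id (τ i) ∘ₗ comul)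
    (hσ : ∀ n : ℤ, ∀ x ∈ 𝒜 n, ∀ y : H, σ x y = counit (R := k) x * counit (R := k) (τ n y))
    {n m : ℤ} {x y : H} (hx : x ∈ 𝒜 n) (hy : y ∈ 𝒜 m) (z : H) :
    (toConv (σ.flip z ∘ₗ LinearMap.mul' k H) * toConv (lift σ)) (x ⊗ₜ y) =
      (toConv (σ x ∘ₗ LinearMap.mul' k H) * toConv (lift σ)) (y ⊗ₜ z) := by
  obtain ⟨𝓡x, hx₁, hx₂⟩ := exists_repr_of_comul_mem_range_mapIncl (hΔ n x hx)
  obtain ⟨𝓡y, hy₁, hy₂⟩ := exists_repr_of_comul_mem_range_mapIncl (hΔ m y hy)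
  set f : ℤ → WithConv (H →ₗ[k] k) := fun i => toConv (counit ∘ₗ τ i) with hf
  set g : WithConv (H →ₗ[k] k) := toConv (counit ∘ₗ τ (n + m) ∘ₗ (hτ.equiv m).symm.toLinearMap)
  have hL := 𝓡x.convMul_tmul_apply_of_factor 𝓡y (Φ := toConv (σ.flip z ∘ₗ LinearMap.mul' k H))
    (Ψ := toConv (lift σ)) (α := 1) (β := f (n + m) z • 1) (γ := 1) (δ := f n)
    (fun i j => by
      simp [hf, hσ (n + m) _ (SetLike.mul_mem_graded (hx₁ i) (hy₁ j)), Bialgebra.counit_mul]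
      ring)
    (fun i j => by simp [hf, hσ n _ (hx₂ i)])
  have hR := 𝓡y.convMul_tmul_apply_of_factor (ℛ k z) (Φ := toConv (σ x ∘ₗ LinearMap.mul' k H))
    (Ψ := toConv (lift σ)) (α := counit (R := k) x • f n) (β := g) (γ := 1) (δ := f m)
    (fun i j => by
      simp [hf, g, hσ n _ hx, hτ.map_mul n (hy₁ i), Bialgebra.counit_mul]
      ring)
    (fun i j => by simp [hf, hσ m _ (hy₂ i)])
  rw [hL, hR]
  simp [hf, g, convMul_counit_comp (hτ_comul m), hτ.equiv_symm_apply_apply]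
  ring

theorem twisted_cocycle (hΔ : ComulPreservesGrading 𝒜) (hτ : IsTwistingSystem 𝒜 τ)
    (hτ_comul : ∀ i : ℤ, comul (R := k) ∘ₗ τ i = map LinearMap.id (τ i) ∘ₗ comul)
    (hσ : ∀ n : ℤ, ∀ x ∈ 𝒜 n, ∀ y : H, σ x y = counit (R := k) x * counit (R := k) (τ n y))
    (x y z : H) :
    (toConv (σ.flip z ∘ₗ LinearMap.mul' k H) * toConv (lift σ)) (x ⊗ₜ y) =
      (toConv (σ x ∘ₗ LinearMap.mul' k H) * toConv (lift σ)) (y ⊗ₜ z) := by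
  induction x using DirectSum.Decomposition.inductionOn 𝒜 with
  | zero => simp
  | add x x' hx hx' =>
    simp only [add_tmul, map_add, LinearMap.add_comp, toConv_add, add_mul, ofConv_add,
      LinearMap.add_apply, hx, hx']
  | homogeneous x =>
    induction y using DirectSum.Decomposition.inductionOn 𝒜 with
    | zero => simp
    | add y y' hy hy' => rw [tmul_add, add_tmul, map_add, map_add, hy, hy']
    | homogeneous y => exact twisted_cocycle_of_mem hΔ hτ hτ_comul hσ x.2 y.2 z

theorem pairing_apply_one (hτ : IsTwistingSystem 𝒜 τ)
    (hσ : ∀ n : ℤ, ∀ x ∈ 𝒜 n, ∀ y : H, σ x y = counit (R := k) x * counit (R := k) (τ n y))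
    (x : H) : σ x 1 = counit (R := k) x := by
  induction x using DirectSum.Decomposition.inductionOn 𝒜 with
  | zero => simp
  | add x x' hx hx' => rw [map_add, LinearMap.add_apply, hx, hx', map_add]
  | homogeneous x => rw [hσ _ x x.2, hτ.2.2.2.1, Bialgebra.counit_one, mul_one]

theorem pairing_one_apply (hτ : IsTwistingSystem 𝒜 τ)
    (hσ : ∀ n : ℤ, ∀ x ∈ 𝒜 n, ∀ y : H, σ x y = counit (R := k) x * counit (R := k) (τ n y))
    (x : H) : σ 1 x = counit (R := k) x := by
  rw [hσ 0 1 (SetLike.one_mem_graded 𝒜), hτ.2.2.1, Bialgebra.counit_one, one_mul,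
    LinearMap.id_apply]

end TwistedPairing

theorem statement12 {k H : Type*} [Field k] [Ring H] [HopfAlgebra k H]
    (𝒜 : ℤ → Submodule k H) [GradedAlgebra 𝒜]
    (hT2 : ∀ n : ℤ, ∀ b ∈ 𝒜 n,
      Coalgebra.comul (R := k) b ∈ LinearMap.range (TensorProduct.mapIncl (𝒜 n) (𝒜 n)))
    (τ μ : ℤ → (H →ₗ[k] H))
    (hτ : IsTwistingSystem 𝒜 τ)
    (hP1τ : ∀ i : ℤ, Coalgebra.comul (R := k) ∘ₗ τ i =
      TensorProduct.map LinearMap.id (τ i) ∘ₗ Coalgebra.comul)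
    (hP1μ : ∀ i : ℤ, Coalgebra.comul (R := k) ∘ₗ μ i =
      TensorProduct.map (μ i) LinearMap.id ∘ₗ Coalgebra.comul)
    (hP2 : ∀ i : ℤ, Coalgebra.counit (R := k) ∘ₗ (τ i ∘ₗ μ i) = Coalgebra.counit)
    (σ σ' : H →ₗ[k] H →ₗ[k] k)
    (hσ : ∀ n : ℤ, ∀ x ∈ 𝒜 n, ∀ y : H,
      σ x y = Coalgebra.counit (R := k) x * Coalgebra.counit (R := k) (τ n y))
    (hσ' : ∀ n : ℤ, ∀ x ∈ 𝒜 n, ∀ y : H,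
      σ' x y = Coalgebra.counit (R := k) x * Coalgebra.counit (R := k) (μ n y)) :
    (∀ (x y z : H) (ιx ιy ιz : Type) (sx : Finset ιx) (sy : Finset ιy) (sz : Finset ιz)
      (x1 x2 : ιx → H) (y1 y2 : ιy → H) (z1 z2 : ιz → H),
      Coalgebra.comul (R := k) x = ∑ i ∈ sx, x1 i ⊗ₜ[k] x2 i →
      Coalgebra.comul (R := k) y = ∑ j ∈ sy, y1 j ⊗ₜ[k] y2 j →
      Coalgebra.comul (R := k) z = ∑ l ∈ sz, z1 l ⊗ₜ[k] z2 l →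
      ∑ i ∈ sx, ∑ j ∈ sy, σ (x1 i * y1 j) z * σ (x2 i) (y2 j) =
        ∑ j ∈ sy, ∑ l ∈ sz, σ x (y1 j * z1 l) * σ (y2 j) (z2 l)) ∧
    (∀ x : H, σ x 1 = Coalgebra.counit (R := k) x ∧
      σ 1 x = Coalgebra.counit (R := k) x) ∧
    (∀ (x y : H) (ιx ιy : Type) (sx : Finset ιx) (sy : Finset ιy)
      (x1 x2 : ιx → H) (y1 y2 : ιy → H),
      Coalgebra.comul (R := k) x = ∑ i ∈ sx, x1 i ⊗ₜ[k] x2 i →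
      Coalgebra.comul (R := k) y = ∑ j ∈ sy, y1 j ⊗ₜ[k] y2 j →
      (∑ i ∈ sx, ∑ j ∈ sy, σ (x1 i) (y1 j) * σ' (x2 i) (y2 j) =
        Coalgebra.counit (R := k) x * Coalgebra.counit (R := k) y ∧
      ∑ i ∈ sx, ∑ j ∈ sy, σ' (x1 i) (y1 j) * σ (x2 i) (y2 j) =
        Coalgebra.counit (R := k) x * Coalgebra.counit (R := k) y)) := by
  have hτμ := fun n => counit_comp_convMul_counit_comp_eq_one (hτ.1 n) (hP1τ n) (hP1μ n) (hP2 n)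
  refine ⟨fun x y z ιx ιy ιz sx sy sz x1 x2 y1 y2 z1 z2 hx hy hz => ?_,
    fun x => ⟨pairing_apply_one hτ hσ x, pairing_one_apply hτ hσ x⟩,
    fun x y ιx ιy sx sy x1 x2 y1 y2 hx hy => ⟨?_, ?_⟩⟩
  · have h := twisted_cocycle hT2 hτ hP1τ hσ x y z
    rw [Repr.convMul_tmul_apply ⟨sx, x1, x2, hx.symm⟩ ⟨sy, y1, y2, hy.symm⟩,
      Repr.convMul_tmul_apply ⟨sy, y1, y2, hy.symm⟩ ⟨sz, z1, z2, hz.symm⟩] at h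
    simpa using h
  · have h := congr($(lift_convMul_lift_eq_one hT2 hσ hσ' fun n => (hτμ n).1) (x ⊗ₜ y))
    rw [Repr.convMul_tmul_apply ⟨sx, x1, x2, hx.symm⟩ ⟨sy, y1, y2, hy.symm⟩] at h
    simpa [mul_comm] using h
  · have h := congr($(lift_convMul_lift_eq_one hT2 hσ' hσ fun n => (hτμ n).2) (x ⊗ₜ y))
    rw [Repr.convMul_tmul_apply ⟨sx, x1, x2, hx.symm⟩ ⟨sy, y1, y2, hy.symm⟩] at h
    simpa [mul_comm] using h
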